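/- Let ρ be a fully separable state on ℂ^{d_{A_1}} ⊗ ⋯ ⊗ ℂ^{d_{A_n}}, and for each q let {E^{A_q}_{α,k}} be an informationally complete (N_{A_q},M_{A_q})-POVM on ℂ^{d_{A_q}} with efficiency parameter x_{A_q}. Then Σ_{α_1,…,α_n} Σ_{k_1,…,k_n} ( tr((E^{A_1}_{α_1,k_1} ⊗ E^{A_2}_{α_2,k_2} ⊗ ⋯ ⊗ E^{A_n}_{α_n,k_n}) ρ) )² ≤ ∏_{i=1}^{n} ((d_{A_i}−1)/d_{A_i}) · (d_{A_i}² + M_{A_i}² x_{A_i})/(M_{A_i}(M_{A_i}−1)). -/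

import Mathlib

open scoped BigOperators ComplexOrder
open Matrix

noncomputable def traceNorm {m n : Type*} [Fintype m] [Fintype n] [DecidableEq n]
    (X : Matrix m n ℂ) : ℝ :=
  (let hA := (Matrix.posSemidef_conjTranspose_mul_self X).1
   (hA.eigenvectorUnitary : Matrix n n ℂ) * diagonal (fun i => ((Real.sqrt (hA.eigenvalues i) : ℝ) : ℂ)) *
     (star (hA.eigenvectorUnitary : Matrix n n ℂ))).trace.re

def IsDensityMatrix {ι : Type*} [Fintype ι] (ρ : Matrix ι ι ℂ) : Prop :=
  ρ.PosSemidef ∧ ρ.trace = 1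

def IsNMPOVM (d N M : ℕ) (x : ℝ)
    (E : Fin N → Fin M → Matrix (Fin d) (Fin d) ℂ) : Prop :=
  (∀ α k, (E α k).PosSemidef) ∧
  (∀ α, ∑ k, E α k = 1) ∧
  (∀ α k, (E α k).trace = (((d : ℝ) / M : ℝ) : ℂ)) ∧
  (∀ α k, (E α k * E α k).trace = (x : ℂ)) ∧
  (∀ α k l, k ≠ l → (E α k * E α l).trace =
      ((((d : ℝ) - M * x) / (M * ((M : ℝ) - 1)) : ℝ) : ℂ)) ∧
  (∀ α β k l, α ≠ β → (E α k * E β l).trace = (((d : ℝ) / M ^ 2 : ℝ) : ℂ)) ∧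
  ((d : ℝ) / M ^ 2 < x ∧ x ≤ min ((d : ℝ) ^ 2 / M ^ 2) ((d : ℝ) / M))

def IsInfoComplete (d N M : ℕ) : Prop := ((M : ℝ) - 1) * N = (d : ℝ) ^ 2 - 1
/-- Tensor (Kronecker) product of a family of matrices, one per subsystem. -/
def famKron {nn : ℕ} {d : Fin nn → ℕ}
    (A : ∀ i, Matrix (Fin (d i)) (Fin (d i)) ℂ) :
    Matrix (∀ i, Fin (d i)) (∀ i, Fin (d i)) ℂ :=
  Matrix.of fun f g => ∏ i, A i (f i) (g i)

/-- An n-partite state is fully separable if it is a finite convex combination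
of tensor products of local density matrices. -/
def FullySeparable {nn : ℕ} {d : Fin nn → ℕ}
    (ρ : Matrix (∀ i, Fin (d i)) (∀ i, Fin (d i)) ℂ) : Prop :=
  ∃ (K : ℕ) (p : Fin K → ℝ)
    (ρs : Fin K → ∀ i, Matrix (Fin (d i)) (Fin (d i)) ℂ),
    (∀ j, 0 ≤ p j) ∧ (∑ j, p j = 1) ∧
    (∀ j i, IsDensityMatrix (ρs j i)) ∧
    ρ = ∑ j, (p j : ℂ) • famKron (ρs j)

/-!
By convexity of `ρ ↦ Σ tr(E ρ)²` it suffices to treat product states, for which the sum factorises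
over the subsystems. On one subsystem write `E_{α,k} = I/M + F_{α,k}`: the traceless parts are
orthogonal for different `α`, have Gram matrix `g + c δ_{kl}` within each `α`, where
`c = (M²x - d)/(M(M-1))`, and satisfy `Σ_k F_{α,k} = 0`. A Bessel-type inequality for such a family
gives `Σ tr(F_{α,k} σ₀)² ≤ c tr σ₀² ≤ c (1 - 1/d)` for `σ₀ = σ - I/d`, and informational
completeness `(M-1)N = d² - 1` turns `N/M + c (1 - 1/d)` into the stated factor.
-/

namespace LinearMap.BilinForm

variable {V ι κ : Type*} [AddCommGroup V] [Module ℝ V] [Fintype ι] [DecidableEq ι]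
  [Fintype κ] [DecidableEq κ]

theorem IsPosSemidef.sum_sq_le_of_gram {B : LinearMap.BilinForm ℝ V} (hB : B.IsPosSemidef)
    {F : ι → κ → V} {g c : ℝ} (hc : 0 < c) (hF : ∀ α, ∑ k, F α k = 0)
    (hgram : ∀ α β k l, B (F α k) (F β l) = if α = β then g + if k = l then c else 0 else 0)
    (v : V) : ∑ α, ∑ k, B (F α k) v ^ 2 ≤ c * B v v := by
  set t := fun α k => B (F α k) v
  set T := ∑ α, ∑ k, t α k ^ 2
  set S := ∑ α, ∑ k, t α k • F α k
  have ht : ∀ α, ∑ k, t α k = 0 := fun α => by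
    simp only [t, ← LinearMap.sum_apply, ← map_sum, hF, map_zero, LinearMap.zero_apply]
  have hSv : B S v = T := by simp [S, T, t, sq]
  have hvS : B v S = T := hB.isSymm.eq v S ▸ hSv
  have hFS : ∀ α k, B (F α k) S = c * t α k := fun α k => by
    simp only [S, map_sum, map_smul, smul_eq_mul, hgram, mul_ite, mul_zero, mul_add,
      Finset.sum_ite_irrel, Finset.sum_const_zero, Finset.sum_ite_eq, Finset.mem_univ, if_true,
      Finset.sum_add_distrib, ← Finset.sum_mul, ht, zero_mul, zero_add]
    ring
  have hSS : B S S = c * T := by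
    have hBS : B S = ∑ α, ∑ k, t α k • B (F α k) := by simp only [S, map_sum, map_smul]
    simp only [hBS, LinearMap.sum_apply, LinearMap.smul_apply, smul_eq_mul, hFS, T,
      Finset.mul_sum]
    exact Finset.sum_congr rfl fun α _ => Finset.sum_congr rfl fun k _ => by ring
  -- `Σ_k F α k = 0` kills the `g`-part of the Gram matrix, so `B S S = c B S v`; now expand
  -- `0 ≤ B (c v - S) (c v - S)`.
  have key : 0 ≤ B (c • v - S) (c • v - S) := hB.isNonneg.nonneg _
  simp only [map_sub, map_smul, LinearMap.sub_apply, LinearMap.smul_apply, smul_eq_mul,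
    hSv, hvS, hSS] at key
  nlinarith

end LinearMap.BilinForm

namespace Matrix

variable {n : Type*}

theorem IsHermitian.sub_real_smul_one [DecidableEq n] {A : Matrix n n ℂ} (hA : A.IsHermitian)
    (r : ℝ) : (A - r • 1).IsHermitian :=
  hA.sub (isHermitian_one.smul (IsSelfAdjoint.all r))

variable [Fintype n]

theorem trace_sub_smul_one_mul_sub_smul_one [DecidableEq n] (A B : Matrix n n ℂ) (a b : ℝ) :
    ((A - a • 1) * (B - b • 1)).trace =
      (A * B).trace - b * A.trace - a * B.trace + a * b * Fintype.card n := by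
  simp only [sub_mul, mul_sub, smul_mul_assoc, mul_smul_comm, one_mul, mul_one,
    trace_sub, trace_smul, trace_one, Complex.real_smul]
  ring

theorem IsHermitian.im_trace_mul {A B : Matrix n n ℂ} (hA : A.IsHermitian) (hB : B.IsHermitian) :
    (A * B).trace.im = 0 := by
  have h := trace_conjTranspose (A * B)
  rw [conjTranspose_mul, hA.eq, hB.eq, trace_mul_comm] at h
  exact Complex.conj_eq_iff_im.mp h.symm

theorem PosSemidef.re_trace_mul_self_le_sq [DecidableEq n] {A : Matrix n n ℂ}
    (hA : A.PosSemidef) : (A * A).trace.re ≤ A.trace.re ^ 2 := by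
  have hsq : (A * A).trace.re = ∑ i, hA.1.eigenvalues i ^ 2 := by
    conv_lhs => rw [hA.1.spectral_theorem, ← map_mul, Unitary.conjStarAlgAut_apply,
      trace_mul_cycle, Unitary.coe_star_mul_self, one_mul, diagonal_mul_diagonal, trace_diagonal]
    simp [sq]
  rw [hsq, hA.1.trace_eq_sum_eigenvalues]
  simpa using Finset.sum_sq_le_sq_sum_of_nonneg fun i _ => hA.eigenvalues_nonneg i

variable (n) in
noncomputable def reTraceForm : LinearMap.BilinForm ℝ (Matrix n n ℂ) :=
  LinearMap.mk₂ ℝ (fun A B => (Aᴴ * B).trace.re)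
    (fun A A' B => by simp [add_mul]) (fun r A B => by simp)
    (fun A B B' => by simp [mul_add]) (fun r A B => by simp)

@[simp] theorem reTraceForm_apply (A B : Matrix n n ℂ) :
    reTraceForm n A B = (Aᴴ * B).trace.re := rfl

theorem isPosSemidef_reTraceForm : (reTraceForm n).IsPosSemidef where
  eq A B := by
    rw [reTraceForm_apply, reTraceForm_apply, ← Complex.conj_re, ← Complex.star_def,
      ← trace_conjTranspose, conjTranspose_mul, conjTranspose_conjTranspose]
  nonneg A := (Complex.nonneg_iff.mp (posSemidef_conjTranspose_mul_self A).trace_nonneg).1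

theorem IsHermitian.reTraceForm_eq {A : Matrix n n ℂ} (hA : A.IsHermitian) (B : Matrix n n ℂ) :
    reTraceForm n A B = (A * B).trace.re := by
  rw [reTraceForm_apply, hA.eq]

end Matrix

noncomputable def sumSqProb {ι κ n : Type*} [Fintype ι] [Fintype κ] [Fintype n]
    (E : ι → κ → Matrix n n ℂ) (ρ : Matrix n n ℂ) : ℝ :=
  ∑ α, ∑ k, ((E α k * ρ).trace.re) ^ 2

section sumSqProb

variable {ι κ n : Type*} [Fintype ι] [Fintype κ] [Fintype n]

theorem sumSqProb_nonneg (E : ι → κ → Matrix n n ℂ) (ρ : Matrix n n ℂ) : 0 ≤ sumSqProb E ρ := by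
  unfold sumSqProb
  positivity

theorem sumSqProb_sum_smul_le {J : Type*} [Fintype J] (E : ι → κ → Matrix n n ℂ) {p : J → ℝ}
    (hp : ∀ j, 0 ≤ p j) (hp1 : ∑ j, p j = 1) (ρ : J → Matrix n n ℂ) :
    sumSqProb E (∑ j, (p j : ℂ) • ρ j) ≤ ∑ j, p j * sumSqProb E (ρ j) := by
  have hjensen : ∀ α k, ((E α k * ∑ j, (p j : ℂ) • ρ j).trace.re) ^ 2 ≤
      ∑ j, p j * (E α k * ρ j).trace.re ^ 2 := fun α k => by
    simpa [Finset.mul_sum, trace_sum, Complex.re_sum] using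
      even_two.convexOn_pow.map_sum_le (fun j _ => hp j) hp1 (fun j _ => Set.mem_univ _)
  calc sumSqProb E (∑ j, (p j : ℂ) • ρ j)
      ≤ ∑ α, ∑ k, ∑ j, p j * (E α k * ρ j).trace.re ^ 2 :=
        Finset.sum_le_sum fun α _ => Finset.sum_le_sum fun k _ => hjensen α k
    _ = ∑ j, p j * sumSqProb E (ρ j) := by
      simp only [sumSqProb, Finset.mul_sum]
      exact (Finset.sum_congr rfl fun α _ => Finset.sum_comm).trans Finset.sum_comm

end sumSqProb

theorem famKron_mul {nn : ℕ} {d : Fin nn → ℕ} (A B : ∀ i, Matrix (Fin (d i)) (Fin (d i)) ℂ) :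
    famKron A * famKron B = famKron fun i => A i * B i := by
  ext f g
  simp only [famKron, mul_apply, of_apply, ← Finset.prod_mul_distrib]
  exact (Fintype.prod_sum fun i j => A i (f i) j * B i j (g i)).symm

theorem trace_famKron {nn : ℕ} {d : Fin nn → ℕ} (A : ∀ i, Matrix (Fin (d i)) (Fin (d i)) ℂ) :
    (famKron A).trace = ∏ i, (A i).trace :=
  (Fintype.prod_sum fun i j => A i j j).symm

def famKronFamily {nn : ℕ} {d N M : Fin nn → ℕ}
    (E : ∀ i, Fin (N i) → Fin (M i) → Matrix (Fin (d i)) (Fin (d i)) ℂ)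
    (α : ∀ i, Fin (N i)) (k : ∀ i, Fin (M i)) : Matrix (∀ i, Fin (d i)) (∀ i, Fin (d i)) ℂ :=
  famKron fun i => E i (α i) (k i)

theorem sumSqProb_famKron {nn : ℕ} {d N M : Fin nn → ℕ}
    {E : ∀ i, Fin (N i) → Fin (M i) → Matrix (Fin (d i)) (Fin (d i)) ℂ}
    (hE : ∀ i a b, (E i a b).IsHermitian) {σ : ∀ i, Matrix (Fin (d i)) (Fin (d i)) ℂ}
    (hσ : ∀ i, (σ i).IsHermitian) :
    sumSqProb (famKronFamily E) (famKron σ) = ∏ i, sumSqProb (E i) (σ i) := by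
  have hre : ∀ α k, (famKronFamily E α k * famKron σ).trace.re =
      ∏ i, (E i (α i) (k i) * σ i).trace.re := fun α k => by
    rw [famKronFamily, famKron_mul, trace_famKron, ← Complex.ofReal_re (∏ i, _),
      Complex.ofReal_prod]
    exact congrArg Complex.re (Finset.prod_congr rfl fun i _ =>
      Complex.ext (by simp) (by simp [(hE i _ _).im_trace_mul (hσ i)]))
  simp only [sumSqProb, hre, ← Finset.prod_pow]
  simp_rw [Fintype.prod_sum]

namespace IsNMPOVM

variable {d N M : ℕ} {x : ℝ} {E : Fin N → Fin M → Matrix (Fin d) (Fin d) ℂ}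

theorem one_lt_outcomes (hE : IsNMPOVM d N M x E) : 1 < M := by
  obtain ⟨-, -, -, -, -, -, hlt, hle⟩ := hE
  have hle' := hle.trans (min_le_right _ _)
  by_contra! hM
  interval_cases M <;> simp at hlt hle' <;> linarith

theorem dim_pos (hE : IsNMPOVM d N M x E) : 0 < d := by
  obtain ⟨-, -, -, -, -, -, hlt, hle⟩ := hE
  have hle' := hle.trans (min_le_right _ _)
  by_contra! hd
  interval_cases d
  simp at hlt hle'
  linarith

theorem gap_pos (hE : IsNMPOVM d N M x E) : 0 < (M : ℝ) ^ 2 * x - d := by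
  have hM : (0 : ℝ) < M := by exact_mod_cast zero_lt_one.trans hE.one_lt_outcomes
  obtain ⟨-, -, -, -, -, -, hlt, -⟩ := hE
  rw [div_lt_iff₀ (by positivity)] at hlt
  linarith

theorem re_trace_sub_smul_one_mul_sub_smul_one (hE : IsNMPOVM d N M x E) (α β k l) :
    ((E α k - (M : ℝ)⁻¹ • 1) * (E β l - (M : ℝ)⁻¹ • 1)).trace.re =
      if α = β then ((d : ℝ) - M * x) / (M * ((M : ℝ) - 1)) - d / M ^ 2 +
        if k = l then ((M : ℝ) ^ 2 * x - d) / (M * ((M : ℝ) - 1)) else 0 else 0 := by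
  have hM : (1 : ℝ) < M := by exact_mod_cast hE.one_lt_outcomes
  have hM0 : (M : ℝ) ≠ 0 := by linarith
  have hM1 : (M : ℝ) - 1 ≠ 0 := by linarith
  obtain ⟨-, -, htr, hsq, hkl, hαβ, -⟩ := hE
  have hshift : ∀ α β k l, ((E α k - (M : ℝ)⁻¹ • 1) * (E β l - (M : ℝ)⁻¹ • 1)).trace.re =
      (E α k * E β l).trace.re - d / M ^ 2 := fun α β k l => by
    rw [trace_sub_smul_one_mul_sub_smul_one, htr, htr, Fintype.card_fin]
    simp only [Complex.sub_re, Complex.add_re, Complex.mul_re, Complex.ofReal_re,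
      Complex.ofReal_im, Complex.natCast_re, Complex.natCast_im]
    field_simp
    ring
  rw [hshift]
  split_ifs with hα hk
  · subst hα hk
    rw [hsq, Complex.ofReal_re]
    field_simp
    ring
  · subst hα
    rw [hkl α k l hk, Complex.ofReal_re]
    ring
  · rw [hαβ α β k l hα, Complex.ofReal_re, sub_self]

theorem sum_sub_smul_one (hE : IsNMPOVM d N M x E) (α : Fin N) :
    ∑ k, (E α k - (M : ℝ)⁻¹ • 1) = 0 := by
  have hM : (M : ℝ) ≠ 0 := by exact_mod_cast (zero_lt_one.trans hE.one_lt_outcomes).ne'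
  rw [Finset.sum_sub_distrib, hE.2.1 α, Finset.sum_const, Finset.card_univ, Fintype.card_fin,
    ← Nat.cast_smul_eq_nsmul ℝ, smul_smul, mul_inv_cancel₀ hM, one_smul, sub_self]

theorem sum_sq_re_trace_mul_sub_le (hE : IsNMPOVM d N M x E) {σ : Matrix (Fin d) (Fin d) ℂ}
    (hσ : IsDensityMatrix σ) :
    ∑ α, ∑ k, ((E α k * σ).trace.re - (M : ℝ)⁻¹) ^ 2 ≤
      ((M : ℝ) ^ 2 * x - d) / (M * ((M : ℝ) - 1)) * (1 - (d : ℝ)⁻¹) := by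
  have hM : (1 : ℝ) < M := by exact_mod_cast hE.one_lt_outcomes
  have hd : (0 : ℝ) < d := by exact_mod_cast hE.dim_pos
  have hc : 0 < ((M : ℝ) ^ 2 * x - d) / (M * ((M : ℝ) - 1)) :=
    div_pos hE.gap_pos (by nlinarith)
  obtain ⟨hσ, hσtr⟩ := hσ
  have hF : ∀ α k, (E α k - (M : ℝ)⁻¹ • 1).IsHermitian := fun α k =>
    (hE.1 α k).isHermitian.sub_real_smul_one _
  have hbessel := isPosSemidef_reTraceForm.sum_sq_le_of_gram hc hE.sum_sub_smul_one
    (fun α β k l => by rw [(hF α k).reTraceForm_eq, hE.re_trace_sub_smul_one_mul_sub_smul_one])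
    (σ - (d : ℝ)⁻¹ • 1)
  have hFσ : ∀ α k, reTraceForm _ (E α k - (M : ℝ)⁻¹ • 1) (σ - (d : ℝ)⁻¹ • 1) =
      (E α k * σ).trace.re - (M : ℝ)⁻¹ := fun α k => by
    rw [(hF α k).reTraceForm_eq, trace_sub_smul_one_mul_sub_smul_one, hE.2.2.1, hσtr,
      Fintype.card_fin]
    simp only [Complex.sub_re, Complex.add_re, Complex.mul_re, Complex.ofReal_re,
      Complex.ofReal_im, Complex.natCast_re, Complex.natCast_im, Complex.one_re, Complex.one_im]
    field_simp
    ring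
  have hσσ : reTraceForm _ (σ - (d : ℝ)⁻¹ • 1) (σ - (d : ℝ)⁻¹ • 1) ≤ 1 - (d : ℝ)⁻¹ := by
    have hpure := hσ.re_trace_mul_self_le_sq
    rw [hσtr, Complex.one_re, one_pow] at hpure
    rw [(hσ.isHermitian.sub_real_smul_one _).reTraceForm_eq, trace_sub_smul_one_mul_sub_smul_one,
      hσtr, Fintype.card_fin]
    simp only [Complex.sub_re, Complex.add_re, Complex.mul_re, Complex.ofReal_re,
      Complex.ofReal_im, Complex.natCast_re, Complex.natCast_im, Complex.one_re, Complex.one_im]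
    field_simp
    nlinarith
  simp only [hFσ] at hbessel
  exact hbessel.trans (mul_le_mul_of_nonneg_left hσσ hc.le)

theorem sumSqProb_le (hE : IsNMPOVM d N M x E) (hIC : IsInfoComplete d N M)
    {σ : Matrix (Fin d) (Fin d) ℂ} (hσ : IsDensityMatrix σ) :
    sumSqProb E σ ≤
      ((d : ℝ) - 1) / d * (((d : ℝ) ^ 2 + (M : ℝ) ^ 2 * x) / ((M : ℝ) * ((M : ℝ) - 1))) := by
  have hM : (1 : ℝ) < M := by exact_mod_cast hE.one_lt_outcomes
  have hd : (0 : ℝ) < d := by exact_mod_cast hE.dim_pos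
  have hprob : ∀ α, ∑ k, (E α k * σ).trace.re = 1 := fun α => by
    rw [← Complex.re_sum, ← trace_sum, ← Finset.sum_mul, hE.2.1 α, one_mul, hσ.2, Complex.one_re]
  have hcenter : ∀ α, ∑ k, (E α k * σ).trace.re ^ 2 =
      ∑ k, ((E α k * σ).trace.re - (M : ℝ)⁻¹) ^ 2 + (M : ℝ)⁻¹ := fun α => by
    simp only [sub_sq, Finset.sum_add_distrib, Finset.sum_sub_distrib, ← Finset.sum_mul,
      ← Finset.mul_sum, hprob, Finset.sum_const, Finset.card_univ, Fintype.card_fin, nsmul_eq_mul]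
    field_simp
    ring
  have hN : (N : ℝ) = ((d : ℝ) ^ 2 - 1) / ((M : ℝ) - 1) := by
    rw [eq_div_iff (by linarith), mul_comm]
    exact hIC
  simp only [sumSqProb, hcenter, Finset.sum_add_distrib, Finset.sum_const, Finset.card_univ,
    Fintype.card_fin, nsmul_eq_mul]
  calc _ ≤ ((M : ℝ) ^ 2 * x - d) / (M * ((M : ℝ) - 1)) * (1 - (d : ℝ)⁻¹) + N * (M : ℝ)⁻¹ :=
        add_le_add_left (hE.sum_sq_re_trace_mul_sub_le hσ) _
    _ = _ := by
      rw [hN]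
      field_simp
      ring

end IsNMPOVM

theorem multipartite_coincidence_bound_general
    (nn : ℕ) (d N M : Fin nn → ℕ) (x : Fin nn → ℝ)
    (E : ∀ i, Fin (N i) → Fin (M i) → Matrix (Fin (d i)) (Fin (d i)) ℂ)
    (hE : ∀ i, IsNMPOVM (d i) (N i) (M i) (x i) (E i))
    (hIC : ∀ i, IsInfoComplete (d i) (N i) (M i))
    (ρ : Matrix (∀ i, Fin (d i)) (∀ i, Fin (d i)) ℂ)
    (hsep : FullySeparable ρ) :
    ∑ α : ∀ i, Fin (N i), ∑ k : ∀ i, Fin (M i),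
        ((famKron (fun i => E i (α i) (k i)) * ρ).trace.re) ^ 2 ≤
      ∏ i, ((d i : ℝ) - 1) / (d i) *
        (((d i : ℝ) ^ 2 + (M i : ℝ) ^ 2 * x i) / ((M i : ℝ) * ((M i : ℝ) - 1))) := by
  obtain ⟨K, p, ρs, hp, hp1, hρs, rfl⟩ := hsep
  calc sumSqProb (famKronFamily E) (∑ j, (p j : ℂ) • famKron (ρs j))
      ≤ ∑ j, p j * sumSqProb (famKronFamily E) (famKron (ρs j)) :=
        sumSqProb_sum_smul_le _ hp hp1 _
    _ = ∑ j, p j * ∏ i, sumSqProb (E i) (ρs j i) := by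
        simp_rw [sumSqProb_famKron (fun i a b => ((hE i).1 a b).isHermitian)
          (fun i => (hρs _ i).1.isHermitian)]
    _ ≤ ∑ j, p j * ∏ i, ((d i : ℝ) - 1) / (d i) *
          (((d i : ℝ) ^ 2 + (M i : ℝ) ^ 2 * x i) / ((M i : ℝ) * ((M i : ℝ) - 1))) := by
        gcongr with j _ i
        · exact hp j
        · exact fun i _ => sumSqProb_nonneg _ _
        · exact (hE i).sumSqProb_le (hIC i) (hρs j i)
    _ = _ := by rw [← Finset.sum_mul, hp1, one_mul]

/-- for a fully separable n-partite state and informationally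
complete (N_{A_q},M_{A_q})-POVMs on each subsystem,
Σ (tr((E^{A_1}_{α_1,k_1} ⊗ ⋯ ⊗ E^{A_n}_{α_n,k_n}) ρ))² ≤
∏_i ((d_{A_i}−1)/d_{A_i})·(d_{A_i}² + M_{A_i}² x_{A_i})/(M_{A_i}(M_{A_i}−1)). -/
theorem multipartite_coincidence_bound
    (nn : ℕ) (d N M : Fin nn → ℕ) (x : Fin nn → ℝ)
    (E : ∀ i, Fin (N i) → Fin (M i) → Matrix (Fin (d i)) (Fin (d i)) ℂ)
    (hE : ∀ i, IsNMPOVM (d i) (N i) (M i) (x i) (E i))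
    (hIC : ∀ i, IsInfoComplete (d i) (N i) (M i))
    (ρ : Matrix (∀ i, Fin (d i)) (∀ i, Fin (d i)) ℂ)
    (hρ : IsDensityMatrix ρ) (hsep : FullySeparable ρ) :
    ∑ α : ∀ i, Fin (N i), ∑ k : ∀ i, Fin (M i),
        ((famKron (fun i => E i (α i) (k i)) * ρ).trace.re) ^ 2 ≤
      ∏ i, ((d i : ℝ) - 1) / (d i) *
        (((d i : ℝ) ^ 2 + (M i : ℝ) ^ 2 * x i) / ((M i : ℝ) * ((M i : ℝ) - 1))) :=
  multipartite_coincidence_bound_general nn d N M x E hE hIC ρ hsep
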